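/- (Embedding-complexity bound) For every predictor f ∈ F and encoder g ∈ G, and every f* ∈ F, g* ∈ G, the target risk satisfies R_T(fg) ≤ R_S(fg) + d_{FΔF}(p_S^g, p_T^g) + d_{F_{GΔG}}(p_S, p_T) + 2R_S(f*g) + R_S(f*g*) + R_T(f*g*). Consequently, taking infimum over f*, g*: R_T(fg) ≤ R_S(fg) + d_{FΔF}(p_S^g, p_T^g) + d_{F_{GΔG}}(p_S, p_T) + λ_{FG}(g), where λ_{FG}(g) = inf_{f' ∈ F, g' ∈ G} [2R_S(f'g) + R_S(f'g') + R_T(f'g')]. -/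

import Mathlib

open MeasureTheory

/-- Zero-one disagreement risk between two hypotheses under distribution `p`. -/
noncomputable def risk {X : Type*} [MeasurableSpace X] (p : Measure X)
    (h h' : X → Bool) : ℝ :=
  ∫ x, (if h x = h' x then (0 : ℝ) else 1) ∂p

/-! The proof splits `R_T(fg)` along the path `fg → f*g → f*g* → h_true` by the triangle
inequality. The two disagreements `R_T(fg, f*g)` and `R_T(f*g, f*g*)` are moved from the target
to the source at the cost of `d_{FΔF}` (same encoder) and `d_{F_{GΔG}}` (same predictor), and the
source disagreements are split once more through `h_true`. -/

section Risk

variable {X : Type*} [MeasurableSpace X] (p : Measure X)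

lemma risk_nonneg (h h' : X → Bool) : 0 ≤ risk p h h' :=
  integral_nonneg fun x => by split_ifs <;> norm_num

lemma risk_comm (h h' : X → Bool) : risk p h h' = risk p h' h := by
  simp only [risk, eq_comm]

variable [IsProbabilityMeasure p]

lemma integrable_disagreement {h h' : X → Bool} (hh : Measurable h) (hh' : Measurable h') :
    Integrable (fun x => if h x = h' x then (0 : ℝ) else 1) p := by
  have hmeas : Measurable fun x => if h x = h' x then (0 : ℝ) else 1 :=
    Measurable.ite (measurableSet_eq_fun hh hh') measurable_const measurable_const
  refine (integrable_const (1 : ℝ)).mono' hmeas.aestronglyMeasurable ?_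
  filter_upwards with x
  split_ifs <;> norm_num

lemma risk_le_one {h h' : X → Bool} (hh : Measurable h) (hh' : Measurable h') :
    risk p h h' ≤ 1 := by
  simpa [risk] using integral_mono (integrable_disagreement p hh hh') (integrable_const (1 : ℝ))
    fun x => by split_ifs <;> norm_num

lemma risk_triangle {h h' h'' : X → Bool} (hh : Measurable h) (hh' : Measurable h')
    (hh'' : Measurable h'') : risk p h h'' ≤ risk p h h' + risk p h' h'' := by
  unfold risk
  rw [← integral_add (integrable_disagreement p hh hh') (integrable_disagreement p hh' hh'')]
  refine integral_mono (integrable_disagreement p hh hh'')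
    ((integrable_disagreement p hh hh').add (integrable_disagreement p hh' hh'')) fun x => ?_
  dsimp only
  split_ifs <;> simp_all

lemma abs_risk_sub_risk_le_one (q : Measure X) [IsProbabilityMeasure q] {h h' : X → Bool}
    (hh : Measurable h) (hh' : Measurable h') : |risk p h h' - risk q h h'| ≤ 1 := by
  rw [abs_sub_le_iff]
  constructor <;>
    linarith [risk_le_one p hh hh', risk_le_one q hh hh', risk_nonneg p h h', risk_nonneg q h h']

end Risk

section BoundedSupremum

lemma le_ciSup₂_of_forall_le {ι κ : Sort*} {u : ι → κ → ℝ} {C : ℝ} (hu : ∀ i j, u i j ≤ C)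
    (i : ι) (j : κ) : u i j ≤ ⨆ i, ⨆ j, u i j :=
  have : Nonempty κ := ⟨j⟩
  le_ciSup_of_le ⟨C, Set.forall_mem_range.2 fun i => ciSup_le (hu i)⟩ i
    (le_ciSup ⟨C, Set.forall_mem_range.2 (hu i)⟩ j)

lemma le_ciSup₃_of_forall_le {ι κ τ : Sort*} {u : ι → κ → τ → ℝ} {C : ℝ}
    (hu : ∀ i j k, u i j k ≤ C) (i : ι) (j : κ) (k : τ) : u i j k ≤ ⨆ i, ⨆ j, ⨆ k, u i j k :=
  have : Nonempty κ := ⟨j⟩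
  have : Nonempty τ := ⟨k⟩
  le_ciSup_of_le ⟨C, Set.forall_mem_range.2 fun i => ciSup_le fun j => ciSup_le (hu i j)⟩ i
    (le_ciSup₂_of_forall_le (hu i) j k)

lemma le_add_ciInf₂ {ι κ : Sort*} [Nonempty ι] [Nonempty κ] {a b : ℝ} {u : ι → κ → ℝ}
    (h : ∀ i j, a ≤ b + u i j) : a ≤ b + ⨅ i, ⨅ j, u i j := by
  have : a - b ≤ ⨅ i, ⨅ j, u i j :=
    le_ciInf fun i => le_ciInf fun j => sub_le_iff_le_add'.2 (h i j)
  linarith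

end BoundedSupremum

section Divergence

variable {X Z : Type*} [MeasurableSpace X] (pS pT : Measure X)
  [IsProbabilityMeasure pS] [IsProbabilityMeasure pT]

/-- `d_{FΔF}(p_S^g, p_T^g)`. -/
noncomputable def latentDivergence (F : Set (Z → Bool)) (g : X → Z) : ℝ :=
  ⨆ f₁ : F, ⨆ f₂ : F,
    |risk pS ((f₁ : Z → Bool) ∘ g) ((f₂ : Z → Bool) ∘ g) -
      risk pT ((f₁ : Z → Bool) ∘ g) ((f₂ : Z → Bool) ∘ g)|

/-- `d_{F_{GΔG}}(p_S, p_T)`. -/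
noncomputable def embeddingDivergence (F : Set (Z → Bool)) (G : Set (X → Z)) : ℝ :=
  ⨆ f₀ : F, ⨆ g₁ : G, ⨆ g₂ : G,
    |risk pS ((f₀ : Z → Bool) ∘ (g₁ : X → Z)) ((f₀ : Z → Bool) ∘ (g₂ : X → Z)) -
      risk pT ((f₀ : Z → Bool) ∘ (g₁ : X → Z)) ((f₀ : Z → Bool) ∘ (g₂ : X → Z))|

variable {F : Set (Z → Bool)}

lemma risk_le_add_latentDivergence {g : X → Z} (hm : ∀ f ∈ F, Measurable (f ∘ g))
    {f₁ f₂ : Z → Bool} (hf₁ : f₁ ∈ F) (hf₂ : f₂ ∈ F) :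
    risk pT (f₁ ∘ g) (f₂ ∘ g) ≤ risk pS (f₁ ∘ g) (f₂ ∘ g) + latentDivergence pS pT F g := by
  have : |risk pS (f₁ ∘ g) (f₂ ∘ g) - risk pT (f₁ ∘ g) (f₂ ∘ g)| ≤ latentDivergence pS pT F g :=
    le_ciSup₂_of_forall_le
      (fun a b : F => abs_risk_sub_risk_le_one pS pT (hm a a.2) (hm b b.2)) ⟨f₁, hf₁⟩ ⟨f₂, hf₂⟩
  linarith [(abs_le.1 this).1]

lemma risk_le_add_embeddingDivergence {G : Set (X → Z)}
    (hm : ∀ f ∈ F, ∀ g ∈ G, Measurable (f ∘ g)) {f : Z → Bool} (hf : f ∈ F)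
    {g₁ g₂ : X → Z} (hg₁ : g₁ ∈ G) (hg₂ : g₂ ∈ G) :
    risk pT (f ∘ g₁) (f ∘ g₂) ≤ risk pS (f ∘ g₁) (f ∘ g₂) + embeddingDivergence pS pT F G := by
  have : |risk pS (f ∘ g₁) (f ∘ g₂) - risk pT (f ∘ g₁) (f ∘ g₂)| ≤
      embeddingDivergence pS pT F G :=
    le_ciSup₃_of_forall_le
      (fun (a : F) (b c : G) => abs_risk_sub_risk_le_one pS pT (hm a a.2 b b.2) (hm a a.2 c c.2))
      ⟨f, hf⟩ ⟨g₁, hg₁⟩ ⟨g₂, hg₂⟩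
  linarith [(abs_le.1 this).1]

theorem risk_le_add_divergences_add_joint_risk {htrue : X → Bool} (hmtrue : Measurable htrue)
    {G : Set (X → Z)} (hm : ∀ f ∈ F, ∀ g ∈ G, Measurable (f ∘ g))
    {f fstar : Z → Bool} (hf : f ∈ F) (hfstar : fstar ∈ F)
    {g gstar : X → Z} (hg : g ∈ G) (hgstar : gstar ∈ G) :
    risk pT (f ∘ g) htrue ≤
      risk pS (f ∘ g) htrue + latentDivergence pS pT F g + embeddingDivergence pS pT F G +
        (2 * risk pS (fstar ∘ g) htrue + risk pS (fstar ∘ gstar) htrue +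
          risk pT (fstar ∘ gstar) htrue) := by
  have hfg := hm f hf g hg
  have hsg := hm fstar hfstar g hg
  have hss := hm fstar hfstar gstar hgstar
  calc risk pT (f ∘ g) htrue
      ≤ risk pT (f ∘ g) (fstar ∘ g) + risk pT (fstar ∘ g) (fstar ∘ gstar) +
          risk pT (fstar ∘ gstar) htrue := by
        linarith [risk_triangle pT hfg hss hmtrue, risk_triangle pT hfg hsg hss]
    _ ≤ risk pS (f ∘ g) (fstar ∘ g) + latentDivergence pS pT F g +
          (risk pS (fstar ∘ g) (fstar ∘ gstar) + embeddingDivergence pS pT F G) +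
          risk pT (fstar ∘ gstar) htrue := by
        gcongr
        · exact risk_le_add_latentDivergence pS pT (fun f' hf' => hm f' hf' g hg) hf hfstar
        · exact risk_le_add_embeddingDivergence pS pT hm hfstar hg hgstar
    _ ≤ _ := by
        linarith [risk_triangle pS hfg hmtrue hsg, risk_triangle pS hsg hmtrue hss,
          risk_comm pS htrue (fstar ∘ g), risk_comm pS htrue (fstar ∘ gstar)]

end Divergence

theorem embedding_complexity_bound_general {X Z : Type*} [MeasurableSpace X]
    (pS pT : Measure X) [IsProbabilityMeasure pS] [IsProbabilityMeasure pT]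
    (htrue : X → Bool) (hmtrue : Measurable htrue)
    (F : Set (Z → Bool)) (G : Set (X → Z))
    (hm : ∀ f ∈ F, ∀ g ∈ G, Measurable (f ∘ g))
    (f : Z → Bool) (hf : f ∈ F) (g : X → Z) (hg : g ∈ G) :
    (∀ fstar ∈ F, ∀ gstar ∈ G,
      risk pT (f ∘ g) htrue ≤
        risk pS (f ∘ g) htrue +
        (⨆ f₁ : F, ⨆ f₂ : F,
          |risk pS ((f₁ : Z → Bool) ∘ g) ((f₂ : Z → Bool) ∘ g) -
            risk pT ((f₁ : Z → Bool) ∘ g) ((f₂ : Z → Bool) ∘ g)|) +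
        (⨆ f₀ : F, ⨆ g₁ : G, ⨆ g₂ : G,
          |risk pS ((f₀ : Z → Bool) ∘ (g₁ : X → Z)) ((f₀ : Z → Bool) ∘ (g₂ : X → Z)) -
            risk pT ((f₀ : Z → Bool) ∘ (g₁ : X → Z)) ((f₀ : Z → Bool) ∘ (g₂ : X → Z))|) +
        (2 * risk pS (fstar ∘ g) htrue + risk pS (fstar ∘ gstar) htrue +
          risk pT (fstar ∘ gstar) htrue)) ∧
    risk pT (f ∘ g) htrue ≤
      risk pS (f ∘ g) htrue +
      (⨆ f₁ : F, ⨆ f₂ : F,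
        |risk pS ((f₁ : Z → Bool) ∘ g) ((f₂ : Z → Bool) ∘ g) -
          risk pT ((f₁ : Z → Bool) ∘ g) ((f₂ : Z → Bool) ∘ g)|) +
      (⨆ f₀ : F, ⨆ g₁ : G, ⨆ g₂ : G,
        |risk pS ((f₀ : Z → Bool) ∘ (g₁ : X → Z)) ((f₀ : Z → Bool) ∘ (g₂ : X → Z)) -
          risk pT ((f₀ : Z → Bool) ∘ (g₁ : X → Z)) ((f₀ : Z → Bool) ∘ (g₂ : X → Z))|) +
      (⨅ f' : F, ⨅ g' : G,
        2 * risk pS ((f' : Z → Bool) ∘ g) htrue +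
          risk pS ((f' : Z → Bool) ∘ (g' : X → Z)) htrue +
          risk pT ((f' : Z → Bool) ∘ (g' : X → Z)) htrue) := by
  have pointwise := fun fstar (hfstar : fstar ∈ F) gstar (hgstar : gstar ∈ G) =>
    risk_le_add_divergences_add_joint_risk pS pT hmtrue hm hf hfstar hg hgstar
  have : Nonempty F := ⟨⟨f, hf⟩⟩
  have : Nonempty G := ⟨⟨g, hg⟩⟩
  exact ⟨pointwise, le_add_ciInf₂ fun f' g' => pointwise f' f'.2 g' g'.2⟩

/-- Theorem 6: embedding-complexity bound, pointwise form and infimum form. -/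
theorem embedding_complexity_bound {X Z : Type*} [MeasurableSpace X]
    (pS pT : Measure X) [IsProbabilityMeasure pS] [IsProbabilityMeasure pT]
    (htrue : X → Bool) (hmtrue : Measurable htrue)
    (F : Set (Z → Bool)) (G : Set (X → Z))
    (hFne : F.Nonempty) (hGne : G.Nonempty)
    (hm : ∀ f ∈ F, ∀ g ∈ G, Measurable (f ∘ g))
    (f : Z → Bool) (hf : f ∈ F) (g : X → Z) (hg : g ∈ G) :
    (∀ fstar ∈ F, ∀ gstar ∈ G,
      risk pT (f ∘ g) htrue ≤
        risk pS (f ∘ g) htrue +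
        (⨆ f₁ : F, ⨆ f₂ : F,
          |risk pS ((f₁ : Z → Bool) ∘ g) ((f₂ : Z → Bool) ∘ g) -
            risk pT ((f₁ : Z → Bool) ∘ g) ((f₂ : Z → Bool) ∘ g)|) +
        (⨆ f₀ : F, ⨆ g₁ : G, ⨆ g₂ : G,
          |risk pS ((f₀ : Z → Bool) ∘ (g₁ : X → Z)) ((f₀ : Z → Bool) ∘ (g₂ : X → Z)) -
            risk pT ((f₀ : Z → Bool) ∘ (g₁ : X → Z)) ((f₀ : Z → Bool) ∘ (g₂ : X → Z))|) +
        (2 * risk pS (fstar ∘ g) htrue + risk pS (fstar ∘ gstar) htrue +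
          risk pT (fstar ∘ gstar) htrue)) ∧
    risk pT (f ∘ g) htrue ≤
      risk pS (f ∘ g) htrue +
      (⨆ f₁ : F, ⨆ f₂ : F,
        |risk pS ((f₁ : Z → Bool) ∘ g) ((f₂ : Z → Bool) ∘ g) -
          risk pT ((f₁ : Z → Bool) ∘ g) ((f₂ : Z → Bool) ∘ g)|) +
      (⨆ f₀ : F, ⨆ g₁ : G, ⨆ g₂ : G,
        |risk pS ((f₀ : Z → Bool) ∘ (g₁ : X → Z)) ((f₀ : Z → Bool) ∘ (g₂ : X → Z)) -
          risk pT ((f₀ : Z → Bool) ∘ (g₁ : X → Z)) ((f₀ : Z → Bool) ∘ (g₂ : X → Z))|) +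
      (⨅ f' : F, ⨅ g' : G,
        2 * risk pS ((f' : Z → Bool) ∘ g) htrue +
          risk pS ((f' : Z → Bool) ∘ (g' : X → Z)) htrue +
          risk pT ((f' : Z → Bool) ∘ (g' : X → Z)) htrue) :=
  embedding_complexity_bound_general pS pT htrue hmtrue F G hm f hf g hg
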